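/- If the set A := { h*_{E,p} : E a nonempty extreme set of B°, p ∈ V } is closed in the epigraph topology, then the set of extreme sets of the dual unit ball B° is closed in the Painlevé–Kuratowski topology, i.e. the Painlevé–Kuratowski limit of any convergent sequence of closed extreme sets of B° is again an extreme set of B°. -/

import Mathlib

open Filter Topology Set

noncomputable section

variable {V : Type*} [NormedAddCommGroup V] [NormedSpace ℝ V]

/-- The dual unit ball `B° = {y ∈ V* : ⟨y,x⟩ ≥ −1 for all x ∈ B}`. -/
def dualBall (V : Type*) [NormedAddCommGroup V] [NormedSpace ℝ V] :
    Set (V →L[ℝ] ℝ) := {y | ∀ x : V, ‖x‖ ≤ 1 → -1 ≤ y x}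

/-- `E` is an extreme set of `C`: `E` is a convex subset of `C` such that whenever a
relative interior point of a segment in `C` lies in `E`, both endpoints lie in `E`. -/
def IsExtremeSet {W : Type*} [AddCommGroup W] [Module ℝ W] (C E : Set W) : Prop :=
  Convex ℝ E ∧ IsExtreme ℝ C E

/-- The Legendre–Fenchel transform `h*_{E,p}` of the function `h_{E,p}` which equals
`⟨·,p⟩ − inf_{y∈E}⟨y,p⟩` on `E` and `+∞` elsewhere; explicitly
`h*_{E,p}(x) = sup_{q∈E} (⟨q,x⟩ − (⟨q,p⟩ − inf_{y∈E}⟨y,p⟩))`. -/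
def hstar (E : Set (V →L[ℝ] ℝ)) (p : V) : V → ℝ :=
  fun x => sSup ((fun q : V →L[ℝ] ℝ =>
    q x - (q p - sInf ((fun y : V →L[ℝ] ℝ => y p) '' E))) '' E)

/-- Painlevé–Kuratowski convergence of a sequence of sets `C n` to a set `L`:
(i) every point of `L` is the limit of points `x_n ∈ C_n` (for `n` large enough), and
(ii) every limit of a convergent sequence of points taken from a subsequence of the
`C_n` belongs to `L`. -/
def PKConverges {W : Type*} [TopologicalSpace W] (C : ℕ → Set W) (L : Set W) : Prop :=
  (∀ x ∈ L, ∃ (N : ℕ) (u : ℕ → W), (∀ n ≥ N, u n ∈ C n) ∧ Tendsto u atTop (𝓝 x)) ∧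
  (∀ φ : ℕ → ℕ, StrictMono φ → ∀ u : ℕ → W, (∀ k, u k ∈ C (φ k)) →
    ∀ x : W, Tendsto u atTop (𝓝 x) → x ∈ L)

/-- The set of extreme sets of the dual unit ball `B°` is closed in the
Painlevé–Kuratowski topology: any Painlevé–Kuratowski limit of a convergent sequence
of closed extreme sets of `B°` is again an extreme set of `B°`. -/
def ExtremeSetsClosed (V : Type*) [NormedAddCommGroup V] [NormedSpace ℝ V] : Prop :=
  ∀ C : ℕ → Set (V →L[ℝ] ℝ),
    (∀ n, IsClosed (C n) ∧ IsExtremeSet (dualBall V) (C n)) →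
    ∀ L : Set (V →L[ℝ] ℝ), IsClosed L → PKConverges C L →
      IsExtremeSet (dualBall V) L

/-- The epigraph of a function `f : V → ℝ ∪ {+∞}`, as a subset of `V × ℝ`. -/
def epigraph {V : Type*} (f : V → WithTop ℝ) : Set (V × ℝ) :=
  {p | f p.1 ≤ (p.2 : WithTop ℝ)}

/-- Membership in the set `A = {h*_{E,p} : E a nonempty extreme set of B°, p ∈ V}`. -/
def MemA {V : Type*} [NormedAddCommGroup V] [NormedSpace ℝ V] (f : V → ℝ) : Prop :=
  ∃ (E : Set (V →L[ℝ] ℝ)) (p : V),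
    IsExtremeSet (dualBall V) E ∧ E.Nonempty ∧ f = hstar E p

/-- The set `A` is closed in the epigraph topology: whenever a sequence of functions
in `A` converges in the epigraph topology (Painlevé–Kuratowski convergence of the
epigraphs in `V × ℝ`) to a lower-semicontinuous function `f : V → ℝ ∪ {+∞}`, the
limit `f` again belongs to `A`. -/
def AClosed (V : Type*) [NormedAddCommGroup V] [NormedSpace ℝ V] : Prop :=
  ∀ fn : ℕ → V → ℝ, (∀ n, MemA (fn n)) →
    ∀ f : V → WithTop ℝ, LowerSemicontinuous f →
      PKConverges (fun n => epigraph (fun x => ((fn n x : ℝ) : WithTop ℝ)))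
        (epigraph f) →
      ∃ g : V → ℝ, MemA g ∧ f = fun x => ((g x : ℝ) : WithTop ℝ)

/-!
The support function `σ_S x = sup_{q ∈ S} q x` of a nonempty `S ⊆ B°` is `1`-Lipschitz and
positively homogeneous, and `h*_{S,0} = σ_S`. By compactness of `B°`, Painlevé–Kuratowski
convergence `C n → L` forces `σ_{C n} → σ_L` pointwise, hence (equi-Lipschitz) in the epigraph
topology, so closedness of `A` yields `σ_L = h*_{E,p}` for an extreme set `E`. Now
`q x - c_q ≤ h*_{E,p} x ≤ σ_E x` for `q ∈ E` with constants `c_q`, and positive homogeneity of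
`σ_L` removes the constants: `σ_L = σ_E`. Both `L` and `E` are closed and convex (an extreme
convex subset of a closed set in finite dimension is closed), so separation gives `L = E`.
-/

section PainleveKuratowski

variable {W : Type*} [TopologicalSpace W] {C : ℕ → Set W} {L : Set W}

theorem PKConverges.comp_add (hpk : PKConverges C L) (N : ℕ) :
    PKConverges (fun n => C (n + N)) L := by
  refine ⟨fun x hx => ?_, fun φ hφ u hu x hx => ?_⟩
  · obtain ⟨M, u, hu, hut⟩ := hpk.1 x hx
    exact ⟨M, fun n => u (n + N), fun n hn => hu _ (by omega),
      hut.comp (tendsto_add_atTop_nat N)⟩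
  · exact hpk.2 (fun k => φ k + N) (fun i j hij => by simpa using hφ hij) u hu x hx

theorem PKConverges.subset_of_isClosed (hpk : PKConverges C L) {K : Set W} (hK : IsClosed K)
    (hCK : ∀ n, C n ⊆ K) : L ⊆ K := fun x hx => by
  obtain ⟨N, u, hu, hut⟩ := hpk.1 x hx
  exact hK.mem_of_tendsto hut (eventually_atTop.2 ⟨N, fun n hn => hCK n (hu n hn)⟩)

theorem PKConverges.convex [AddCommGroup W] [Module ℝ W] [ContinuousAdd W]
    [ContinuousConstSMul ℝ W] (hpk : PKConverges C L) (hC : ∀ n, Convex ℝ (C n)) :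
    Convex ℝ L := by
  intro x hx y hy a b ha hb hab
  obtain ⟨N₁, u, hu, hut⟩ := hpk.1 x hx
  obtain ⟨N₂, v, hv, hvt⟩ := hpk.1 y hy
  set N := max N₁ N₂
  refine hpk.2 (· + N) (strictMono_id.add_const N) (fun k => a • u (k + N) + b • v (k + N))
    (fun k => hC _ (hu _ (by omega)) (hv _ (by omega)) ha hb hab) _ ?_
  exact ((hut.comp (tendsto_add_atTop_nat N)).const_smul a).add
    ((hvt.comp (tendsto_add_atTop_nat N)).const_smul b)

end PainleveKuratowski

theorem mem_epigraph_coe_iff {X : Type*} {f : X → ℝ} {p : X × ℝ} :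
    p ∈ epigraph (fun x => (f x : WithTop ℝ)) ↔ f p.1 ≤ p.2 :=
  WithTop.coe_le_coe

theorem pkConverges_epigraph_of_tendsto {X : Type*} [PseudoMetricSpace X] {f : ℕ → X → ℝ}
    {g : X → ℝ} {K : NNReal} (hf : ∀ n, LipschitzWith K (f n))
    (hfg : ∀ x, Tendsto (fun n => f n x) atTop (𝓝 (g x))) :
    PKConverges (fun n => epigraph fun x => (f n x : WithTop ℝ))
      (epigraph fun x => (g x : WithTop ℝ)) := by
  simp only [PKConverges, mem_epigraph_coe_iff]
  refine ⟨fun ⟨x, α⟩ hα => ?_, fun φ hφ w hw ⟨x, α⟩ hwt => ?_⟩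
  · refine ⟨0, fun n => (x, max α (f n x)), fun n _ => le_max_right _ _, ?_⟩
    have := (tendsto_const_nhds (x := α)).max (hfg x)
    rw [max_eq_left hα] at this
    exact tendsto_const_nhds.prodMk_nhds this
  · have hdist : Tendsto (fun k => dist x (w k).1) atTop (𝓝 0) :=
      by simpa using (tendsto_const_nhds (x := x)).dist ((continuous_fst.tendsto _).comp hwt)
    have hbound : Tendsto (fun k => (w k).2 + K * dist x (w k).1) atTop (𝓝 (α + K * 0)) :=
      ((continuous_snd.tendsto _).comp hwt).add (hdist.const_mul _)
    refine le_of_tendsto_of_tendsto' ((hfg x).comp hφ.tendsto_atTop) (by simpa using hbound)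
      fun k => ?_
    exact ((hf _).le_add_mul x (w k).1).trans (by simpa using hw k)

section DualBall

theorem mem_dualBall_iff_norm_le {q : V →L[ℝ] ℝ} : q ∈ dualBall V ↔ ‖q‖ ≤ 1 := by
  refine ⟨fun h => q.opNorm_le_of_unit_norm zero_le_one fun x hx => ?_, fun h x hx => ?_⟩
  · have h' := h (-x) (by rw [norm_neg, hx])
    rw [map_neg] at h'
    exact abs_le.2 ⟨h x hx.le, by linarith⟩
  · exact neg_le_of_abs_le ((q.le_opNorm x).trans (mul_le_one₀ h (norm_nonneg x) hx))

theorem dualBall_eq_closedBall : dualBall V = Metric.closedBall 0 1 := by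
  ext q
  rw [mem_dualBall_iff_norm_le, mem_closedBall_zero_iff]

theorem isClosed_dualBall : IsClosed (dualBall V) :=
  dualBall_eq_closedBall (V := V) ▸ Metric.isClosed_closedBall

theorem isCompact_dualBall [FiniteDimensional ℝ V] : IsCompact (dualBall V) :=
  dualBall_eq_closedBall (V := V) ▸ isCompact_closedBall 0 1

theorem abs_apply_le_of_mem_dualBall {q : V →L[ℝ] ℝ} (hq : q ∈ dualBall V) (x : V) :
    |q x| ≤ ‖x‖ :=
  (q.le_opNorm x).trans (mul_le_of_le_one_left (norm_nonneg x) (mem_dualBall_iff_norm_le.1 hq))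

end DualBall

/-- Meaningful only for nonempty `S ⊆ dualBall V`: `sSup` of an empty or unbounded set of reals
is `0`. -/
def supportFunction (S : Set (V →L[ℝ] ℝ)) (x : V) : ℝ :=
  sSup ((fun q : V →L[ℝ] ℝ => q x) '' S)

section SupportFunction

variable {S : Set (V →L[ℝ] ℝ)}

theorem bddAbove_image_apply (hS : S ⊆ dualBall V) (x : V) :
    BddAbove ((fun q : V →L[ℝ] ℝ => q x) '' S) :=
  ⟨‖x‖, forall_mem_image.2 fun _ hq => le_of_abs_le (abs_apply_le_of_mem_dualBall (hS hq) x)⟩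

theorem le_supportFunction (hS : S ⊆ dualBall V) {q : V →L[ℝ] ℝ} (hq : q ∈ S) (x : V) :
    q x ≤ supportFunction S x :=
  le_csSup (bddAbove_image_apply hS x) (mem_image_of_mem _ hq)

theorem supportFunction_le (hne : S.Nonempty) {x : V} {a : ℝ} (h : ∀ q ∈ S, q x ≤ a) :
    supportFunction S x ≤ a :=
  csSup_le (hne.image _) (forall_mem_image.2 h)

theorem supportFunction_smul {t : ℝ} (ht : 0 ≤ t) (x : V) :
    supportFunction S (t • x) = t * supportFunction S x := by
  rw [supportFunction, supportFunction, ← smul_eq_mul, ← Real.sSup_smul_of_nonneg ht,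
    ← image_smul, image_image]
  simp only [map_smul, smul_eq_mul]

theorem lipschitzWith_supportFunction (hS : S ⊆ dualBall V) (hne : S.Nonempty) :
    LipschitzWith 1 (supportFunction S) := by
  refine LipschitzWith.of_le_add_mul 1 fun x y => supportFunction_le hne fun q hq => ?_
  have hxy : q (x - y) ≤ ‖x - y‖ := le_of_abs_le (abs_apply_le_of_mem_dualBall (hS hq) _)
  rw [map_sub] at hxy
  rw [NNReal.coe_one, one_mul, dist_eq_norm]
  linarith [le_supportFunction hS hq y]

end SupportFunction

section Convergence

variable {C : ℕ → Set (V →L[ℝ] ℝ)} {L : Set (V →L[ℝ] ℝ)}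

theorem eventually_lt_supportFunction (hpk : PKConverges C L) (hC : ∀ n, C n ⊆ dualBall V)
    (hLne : L.Nonempty) {x : V} {a : ℝ} (ha : a < supportFunction L x) :
    ∀ᶠ n in atTop, a < supportFunction (C n) x := by
  obtain ⟨_, ⟨q, hqL, rfl⟩, hq⟩ := exists_lt_of_lt_csSup (hLne.image _) ha
  obtain ⟨N, u, hu, hut⟩ := hpk.1 q hqL
  have hux : Tendsto (fun n => u n x) atTop (𝓝 (q x)) :=
    ((ContinuousLinearMap.apply ℝ ℝ x).continuous.tendsto q).comp hut
  filter_upwards [hux.eventually (eventually_gt_nhds hq), eventually_ge_atTop N] with n hn hN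
  exact hn.trans_le (le_supportFunction (hC n) (hu n hN) x)

theorem eventually_supportFunction_lt [FiniteDimensional ℝ V] (hpk : PKConverges C L)
    (hCne : ∀ n, (C n).Nonempty) (hC : ∀ n, C n ⊆ dualBall V) {x : V} {a : ℝ}
    (ha : supportFunction L x < a) : ∀ᶠ n in atTop, supportFunction (C n) x < a := by
  by_contra hfreq
  obtain ⟨φ, hφ, hφa⟩ := extraction_of_frequently_atTop
    (not_eventually.1 hfreq |>.mono fun _ => le_of_not_gt)
  obtain ⟨b, hLb, hba⟩ := exists_between ha
  have hex : ∀ k, ∃ q ∈ C (φ k), b < q x := fun k => by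
    obtain ⟨_, ⟨q, hq, rfl⟩, hbq⟩ :=
      exists_lt_of_lt_csSup ((hCne (φ k)).image _) (hba.trans_le (hφa k))
    exact ⟨q, hq, hbq⟩
  choose q hqC hbq using hex
  -- a cluster point of the `q k` lies in `L` but has value at least `b > σ_L x` at `x`
  obtain ⟨r, -, ψ, hψ, hqr⟩ := isCompact_dualBall.tendsto_subseq fun k => hC _ (hqC k)
  have hrL : r ∈ L := hpk.2 (φ ∘ ψ) (hφ.comp hψ) (q ∘ ψ) (fun k => hqC (ψ k)) r hqr
  have hbr : b ≤ r x := ge_of_tendsto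
    (((ContinuousLinearMap.apply ℝ ℝ x).continuous.tendsto r).comp hqr)
    (Eventually.of_forall fun k => (hbq (ψ k)).le)
  have hLsub := hpk.subset_of_isClosed isClosed_dualBall hC
  linarith [le_supportFunction hLsub hrL x]

theorem PKConverges.tendsto_supportFunction [FiniteDimensional ℝ V] (hpk : PKConverges C L)
    (hCne : ∀ n, (C n).Nonempty) (hC : ∀ n, C n ⊆ dualBall V) (hLne : L.Nonempty) (x : V) :
    Tendsto (fun n => supportFunction (C n) x) atTop (𝓝 (supportFunction L x)) :=
  tendsto_order.2 ⟨fun _ ha => eventually_lt_supportFunction hpk hC hLne ha,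
    fun _ ha => eventually_supportFunction_lt hpk hCne hC ha⟩

theorem PKConverges.epigraph_supportFunction [FiniteDimensional ℝ V] (hpk : PKConverges C L)
    (hCne : ∀ n, (C n).Nonempty) (hC : ∀ n, C n ⊆ dualBall V) (hLne : L.Nonempty) :
    PKConverges (fun n => epigraph fun x => (supportFunction (C n) x : WithTop ℝ))
      (epigraph fun x => (supportFunction L x : WithTop ℝ)) :=
  pkConverges_epigraph_of_tendsto (fun n => lipschitzWith_supportFunction (hC n) (hCne n))
    (hpk.tendsto_supportFunction hCne hC hLne)

end Convergence

section Hstar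

variable {E : Set (V →L[ℝ] ℝ)}

theorem hstar_zero (hne : E.Nonempty) : hstar E 0 = supportFunction E := by
  ext x
  simp only [hstar, supportFunction, map_zero, hne.image_const, csInf_singleton, sub_zero]

theorem sInf_image_apply_le (hE : E ⊆ dualBall V) {q : V →L[ℝ] ℝ} (hq : q ∈ E) (p : V) :
    sInf ((fun y : V →L[ℝ] ℝ => y p) '' E) ≤ q p := by
  refine csInf_le ⟨-‖p‖, forall_mem_image.2 fun y hy => ?_⟩ (mem_image_of_mem _ hq)
  exact neg_le_of_abs_le (abs_apply_le_of_mem_dualBall (hE hy) p)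

theorem hstar_le_supportFunction (hE : E ⊆ dualBall V) (hne : E.Nonempty) (p x : V) :
    hstar E p x ≤ supportFunction E x :=
  csSup_le (hne.image _) <| forall_mem_image.2 fun q hq => by
    linarith [sInf_image_apply_le hE hq p, le_supportFunction hE hq x]

theorem sub_le_hstar (hE : E ⊆ dualBall V) {q : V →L[ℝ] ℝ} (hq : q ∈ E) (p x : V) :
    q x - (q p - sInf ((fun y : V →L[ℝ] ℝ => y p) '' E)) ≤ hstar E p x := by
  refine le_csSup ⟨‖x‖, forall_mem_image.2 fun y hy => ?_⟩ (mem_image_of_mem _ hq)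
  linarith [le_of_abs_le (abs_apply_le_of_mem_dualBall (hE hy) x), sInf_image_apply_le hE hy p]

theorem le_of_forall_pos_mul_sub_le {a b c : ℝ} (h : ∀ t > 0, t * a - c ≤ t * b) : a ≤ b := by
  by_contra! hba
  have ht : 0 < (|c| + 1) / (a - b) := by positivity
  have key := h _ ht
  rw [← sub_nonpos, show (|c| + 1) / (a - b) * a - c - (|c| + 1) / (a - b) * b = |c| + 1 - c by
    field_simp; ring] at key
  linarith [le_abs_self c]

theorem supportFunction_eq_of_hstar_eq {L : Set (V →L[ℝ] ℝ)} (hE : E ⊆ dualBall V)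
    (hne : E.Nonempty) {p : V} (hEL : hstar E p = supportFunction L) :
    supportFunction E = supportFunction L := by
  refine funext fun x => le_antisymm (supportFunction_le hne fun q hq => ?_)
    (hEL ▸ hstar_le_supportFunction hE hne p x)
  -- `σ_L = h*_{E,p}` is positively homogeneous and exceeds `q` minus a constant
  refine le_of_forall_pos_mul_sub_le (c := q p - sInf ((fun y : V →L[ℝ] ℝ => y p) '' E))
    fun t ht => ?_
  have := sub_le_hstar hE hq p (t • x)
  rwa [hEL, supportFunction_smul ht.le, map_smul, smul_eq_mul] at this

end Hstar

theorem exists_forall_eq_apply [FiniteDimensional ℝ V] (f : (V →L[ℝ] ℝ) →L[ℝ] ℝ) :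
    ∃ z : V, ∀ r : V →L[ℝ] ℝ, f r = r z := by
  obtain ⟨z, hz⟩ := (Module.evalEquiv ℝ V).surjective
    (f.toLinearMap ∘ₗ (LinearMap.toContinuousLinearMap : (V →ₗ[ℝ] ℝ) ≃ₗ[ℝ] _).toLinearMap)
  exact ⟨z, fun r => (LinearMap.congr_fun hz r.toLinearMap).symm⟩

theorem subset_of_supportFunction_le [FiniteDimensional ℝ V] {S T : Set (V →L[ℝ] ℝ)}
    (hS : Convex ℝ S) (hSc : IsClosed S) (hSne : S.Nonempty) (hT : T ⊆ dualBall V)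
    (hTS : ∀ x, supportFunction T x ≤ supportFunction S x) : T ⊆ S := by
  intro q hqT
  by_contra hqS
  obtain ⟨f, u, hfS, hfq⟩ := geometric_hahn_banach_closed_point hS hSc hqS
  obtain ⟨z, hz⟩ := exists_forall_eq_apply f
  have hSu : supportFunction S z ≤ u := supportFunction_le hSne fun r hr => (hz r ▸ hfS r hr).le
  linarith [hz q ▸ hfq, le_supportFunction hT hqT z, hTS z]

theorem eq_of_supportFunction_eq [FiniteDimensional ℝ V] {S T : Set (V →L[ℝ] ℝ)}
    (hS : Convex ℝ S) (hSc : IsClosed S) (hSne : S.Nonempty) (hSB : S ⊆ dualBall V)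
    (hT : Convex ℝ T) (hTc : IsClosed T) (hTne : T.Nonempty) (hTB : T ⊆ dualBall V)
    (hST : supportFunction S = supportFunction T) : S = T :=
  Subset.antisymm (subset_of_supportFunction_le hT hTc hTne hSB fun x => (congrFun hST x).le)
    (subset_of_supportFunction_le hS hSc hSne hTB fun x => (congrFun hST x).ge)

theorem exists_pos_add_smul_sub_mem_of_mem_intrinsicInterior {W : Type*} [AddCommGroup W]
    [Module ℝ W] [TopologicalSpace W] [IsTopologicalAddGroup W] [ContinuousSMul ℝ W]
    {s : Set W} {x y : W} (hy : y ∈ intrinsicInterior ℝ s) (hx : x ∈ affineSpan ℝ s) :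
    ∃ t : ℝ, 0 < t ∧ y + t • (y - x) ∈ s := by
  obtain ⟨y', hy'int, rfl⟩ := mem_intrinsicInterior.1 hy
  let c : ℝ → affineSpan ℝ s := fun t => ⟨t • (y' - x) +ᵥ (y' : W),
    (affineSpan ℝ s).smul_vsub_vadd_mem t y'.2 hx y'.2⟩
  have hc : Continuous c := by fun_prop
  have hc0 : c 0 = y' := by ext; simp [c]
  have hev : ∀ᶠ t in 𝓝[>] (0 : ℝ), c t ∈ interior (((↑) : affineSpan ℝ s → W) ⁻¹' s) :=
    nhdsWithin_le_nhds <| hc.continuousAt.preimage_mem_nhds (hc0 ▸ isOpen_interior.mem_nhds hy'int)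
  obtain ⟨t, ht, ht0⟩ := (hev.and self_mem_nhdsWithin).exists
  exact ⟨t, ht0, by simpa [c, add_comm] using interior_subset ht⟩

theorem IsExtreme.isClosed {W : Type*} [NormedAddCommGroup W] [NormedSpace ℝ W]
    [FiniteDimensional ℝ W] {C E : Set W} (hEC : IsExtreme ℝ C E) (hE : Convex ℝ E)
    (hC : IsClosed C) : IsClosed E := by
  rcases E.eq_empty_or_nonempty with rfl | hne
  · exact isClosed_empty
  refine closure_subset_iff_isClosed.1 fun x hx => ?_
  obtain ⟨y, hy⟩ := hne.intrinsicInterior hE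
  have hxA : x ∈ affineSpan ℝ E :=
    closure_minimal (subset_affineSpan ℝ E) (affineSpan ℝ E).closed_of_finiteDimensional hx
  obtain ⟨t, ht, hyt⟩ := exists_pos_add_smul_sub_mem_of_mem_intrinsicInterior hy hxA
  -- `y ∈ E` is an interior point of the segment from `x ∈ C` to `y + t • (y - x) ∈ E`
  have hseg : y ∈ openSegment ℝ x (y + t • (y - x)) := by
    refine ⟨t / (t + 1), 1 / (t + 1), by positivity, by positivity, by field_simp, ?_⟩
    match_scalars <;> field_simp <;> ring
  exact hEC.left_mem_of_mem_openSegment (closure_minimal hEC.1 hC hx) (hEC.1 hyt)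
    (intrinsicInterior_subset hy) hseg

theorem isExtremeSet_empty {W : Type*} [AddCommGroup W] [Module ℝ W] (C : Set W) :
    IsExtremeSet C ∅ :=
  ⟨convex_empty, empty_subset C, fun _ _ _ _ _ hx => hx.elim⟩

theorem extremeSetsClosed_of_aClosed (V : Type*) [NormedAddCommGroup V]
    [NormedSpace ℝ V] [FiniteDimensional ℝ V] (h : AClosed V) :
    ExtremeSetsClosed V := by
  intro C hC L hLc hpk
  rcases L.eq_empty_or_nonempty with rfl | hLne
  · exact isExtremeSet_empty _
  obtain ⟨N, u, hu, -⟩ := hpk.1 _ hLne.some_mem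
  have hpk' := hpk.comp_add N
  have hCne : ∀ n, (C (n + N)).Nonempty := fun n => ⟨u (n + N), hu _ (by omega)⟩
  have hCsub : ∀ n, C (n + N) ⊆ dualBall V := fun n => (hC _).2.2.1
  have hLsub := hpk'.subset_of_isClosed isClosed_dualBall hCsub
  have hA : ∀ n, MemA (hstar (C (n + N)) 0) := fun n => ⟨_, 0, (hC _).2, hCne n, rfl⟩
  have hepi := hpk'.epigraph_supportFunction hCne hCsub hLne
  simp only [← hstar_zero (hCne _)] at hepi
  have hlsc : LowerSemicontinuous fun x => (supportFunction L x : WithTop ℝ) :=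
    (WithTop.continuous_coe.comp
      (lipschitzWith_supportFunction hLsub hLne).continuous).lowerSemicontinuous
  obtain ⟨_, ⟨E, p, hE, hEne, rfl⟩, hfg⟩ := h _ hA _ hlsc hepi
  have hEL : hstar E p = supportFunction L :=
    funext fun x => (WithTop.coe_inj.1 (congrFun hfg x)).symm
  have hσ := supportFunction_eq_of_hstar_eq hE.2.1 hEne hEL
  have hLE : L = E := eq_of_supportFunction_eq (hpk.convex fun n => (hC n).2.1) hLc hLne hLsub
    hE.1 (hE.2.isClosed hE.1 isClosed_dualBall) hEne hE.2.1 hσ.symm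
  exact hLE ▸ hE
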